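/- arXiv:1912.02427 — 5 statements merged into one kernel-verified Lean document; each statement's English description precedes it below -/
import Mathlib

section
/- Suppose the matrix A ∈ ℝ^{n×m} is a tight frame satisfying (1/K)·A Aᵀ = I where K = m/n, the columns of A satisfy ‖a_i‖ ≤ M for all i, the mutual coherence max_{i≠j} |⟨a_i/‖a_i‖, a_j/‖a_j‖⟩| ≤ μ, and M^{4/3} K^{1/3} < 4^{-1/3} ξ for some ξ > 0. Let q ∈ S^{n-1} and ζ = Aᵀq, and set α_i = ‖ζ‖₄⁴/‖a_i‖² and β_i = (∑_{j≠i} ⟨a_i, a_j⟩ ζ_j³)/‖a_i‖². If ‖ζ‖₄⁴ ≥ ξ μ^{2/3} ‖ζ‖₃², then it is impossible that |ζ_i| < 2|β_i|/α_i for all i ∈ [m]. -/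
/-!
Write `ζ_i = ⟪a_i, q⟫` and `B = 2 μ M²`. Incoherence bounds the cross term
`|∑_{j ≠ i} ⟪a_i, a_j⟫ ζ_j³| ≤ μ M² ‖ζ‖₃³`, so the assumed inequalities give
`|ζ_i| ‖ζ‖₄⁴ < B ‖ζ‖₃³` for every `i`. Averaging these against the weights `ζ_i²` (whose sum is
`K` by tightness) and `|ζ_i|³` yields `‖ζ‖₄⁴ ‖ζ‖₃³ < K B ‖ζ‖₃³` and `‖ζ‖₄⁸ < B ‖ζ‖₃⁶`, hence
`‖ζ‖₄¹² < K B² ‖ζ‖₃⁶`. Cubing the region condition gives `ξ³ μ² ‖ζ‖₃⁶ ≤ ‖ζ‖₄¹²`, so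
`ξ³ < 4 M⁴ K`, which is the cube of the assumption `M^{4/3} K^{1/3} < 4^{-1/3} ξ` reversed.
-/

open RealInnerProductSpace Finset

lemma abs_inner_le_mul_norm_mul_norm_of_abs_inner_normalize_le
    {E : Type*} [NormedAddCommGroup E] [InnerProductSpace ℝ E] {x y : E} {μ : ℝ}
    (h : |⟪‖x‖⁻¹ • x, ‖y‖⁻¹ • y⟫| ≤ μ) : |⟪x, y⟫| ≤ μ * (‖x‖ * ‖y‖) := by
  rcases eq_or_ne x 0 with rfl | hx
  · simp
  rcases eq_or_ne y 0 with rfl | hy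
  · simp
  rw [real_inner_smul_left, real_inner_smul_right, abs_mul, abs_mul, abs_inv, abs_inv,
    abs_norm, abs_norm, ← mul_assoc, ← mul_inv, inv_mul_le_iff₀ (by positivity)] at h
  linarith

lemma abs_sum_mul_le_mul_sum_abs {ι : Type*} (s : Finset ι) {f g : ι → ℝ} {c : ℝ}
    (hf : ∀ i ∈ s, |f i| ≤ c) : |∑ i ∈ s, f i * g i| ≤ c * ∑ i ∈ s, |g i| := by
  calc |∑ i ∈ s, f i * g i| ≤ ∑ i ∈ s, |f i| * |g i| := by
        simpa only [abs_mul] using abs_sum_le_sum_abs (fun i ↦ f i * g i) s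
    _ ≤ ∑ i ∈ s, c * |g i| :=
        sum_le_sum fun i hi ↦ mul_le_mul_of_nonneg_right (hf i hi) (abs_nonneg _)
    _ = c * ∑ i ∈ s, |g i| := (mul_sum _ _ _).symm

lemma sum_mul_lt_sum_mul_of_forall_lt {ι : Type*} {s : Finset ι} {w f : ι → ℝ} {c : ℝ}
    (hf : ∀ i ∈ s, f i < c) (hw : ∀ i ∈ s, 0 ≤ w i) (hpos : ∃ i ∈ s, 0 < w i) :
    ∑ i ∈ s, w i * f i < (∑ i ∈ s, w i) * c := by
  rw [sum_mul]
  obtain ⟨i, hi, hwi⟩ := hpos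
  exact sum_lt_sum (fun j hj ↦ mul_le_mul_of_nonneg_left (hf j hj).le (hw j hj))
    ⟨i, hi, mul_lt_mul_of_pos_left (hf i hi) hwi⟩

lemma sum_pow_four_cube_lt {ι : Type*} [Fintype ι] {ζ : ι → ℝ} {B : ℝ} (hζ : ∃ i, ζ i ≠ 0)
    (h : ∀ i, |ζ i| * ∑ j, ζ j ^ 4 < B * ∑ j, |ζ j| ^ 3) :
    (∑ i, ζ i ^ 4) ^ 3 < (∑ i, ζ i ^ 2) * B ^ 2 * (∑ i, |ζ i| ^ 3) ^ 2 := by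
  obtain ⟨i₀, hi₀⟩ := hζ
  set S₃ := ∑ i, |ζ i| ^ 3
  set S₄ := ∑ i, ζ i ^ 4
  have hS₃ : 0 < S₃ :=
    sum_pos' (fun i _ ↦ by positivity) ⟨i₀, mem_univ _, by positivity⟩
  have hS₄ : 0 < S₄ :=
    sum_pos' (fun i _ ↦ by positivity) ⟨i₀, mem_univ _, by positivity⟩
  have h₂ : S₃ * S₄ < (∑ i, ζ i ^ 2) * (B * S₃) := by
    have := sum_mul_lt_sum_mul_of_forall_lt (s := univ) (w := fun i ↦ ζ i ^ 2)
      (fun i _ ↦ h i) (fun i _ ↦ sq_nonneg _) ⟨i₀, mem_univ _, by positivity⟩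
    calc S₃ * S₄ = ∑ i, ζ i ^ 2 * (|ζ i| * S₄) := by
          rw [sum_mul]; exact sum_congr rfl fun i _ ↦ by rw [← sq_abs]; ring
      _ < _ := this
  have h₃ : S₄ * S₄ < S₃ * (B * S₃) := by
    have := sum_mul_lt_sum_mul_of_forall_lt (s := univ) (w := fun i ↦ |ζ i| ^ 3)
      (fun i _ ↦ h i) (fun i _ ↦ by positivity) ⟨i₀, mem_univ _, by positivity⟩
    calc S₄ * S₄ = ∑ i, |ζ i| ^ 3 * (|ζ i| * S₄) := by
          rw [sum_mul]; exact sum_congr rfl fun i _ ↦ by rw [← Even.pow_abs ⟨2, rfl⟩]; ring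
      _ < _ := this
  have := mul_lt_mul'' h₃ h₂ (by positivity) (by positivity)
  nlinarith

lemma abs_sum_erase_inner_mul_inner_pow_three_le {E ι : Type*} [NormedAddCommGroup E]
    [InnerProductSpace ℝ E] [Fintype ι] [DecidableEq ι] {a : ι → E} {M μ : ℝ} (q : E)
    (haM : ∀ i, ‖a i‖ ≤ M) (hμ : 0 ≤ μ)
    (hcoh : ∀ i j, i ≠ j → |⟪‖a i‖⁻¹ • a i, ‖a j‖⁻¹ • a j⟫| ≤ μ) (i : ι) :
    |∑ j ∈ univ.erase i, ⟪a i, a j⟫ * ⟪a j, q⟫ ^ 3| ≤ μ * M ^ 2 * ∑ j, |⟪a j, q⟫| ^ 3 := by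
  have hM : 0 ≤ M := (norm_nonneg _).trans (haM i)
  refine (abs_sum_mul_le_mul_sum_abs (c := μ * M ^ 2) _ fun j hj ↦ ?_).trans ?_
  · refine (abs_inner_le_mul_norm_mul_norm_of_abs_inner_normalize_le
      (hcoh i j (ne_of_mem_erase hj).symm)).trans ?_
    rw [sq]
    gcongr <;> exact haM _
  · simp only [abs_pow]
    gcongr
    exact erase_subset _ _

/-- For `c = 0` the hypothesis `h` is false, its right side being the junk value `0 / 0 = 0`. -/
lemma mul_lt_two_mul_of_lt_two_mul_abs_div_div {z C D S c : ℝ}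
    (h : z < 2 * |C / c| / (S / c)) (hC : |C| ≤ D) (hS : 0 < S) (hc : 0 ≤ c) :
    z * S < 2 * D := by
  rcases hc.eq_or_lt with rfl | hc
  · simp only [div_zero, abs_zero, mul_zero] at h
    nlinarith [abs_nonneg C]
  · rw [abs_div, abs_of_pos hc, mul_div_assoc', div_div_div_cancel_right₀ hc.ne',
      lt_div_iff₀ hS] at h
    linarith

lemma pow_three_mul_sq_mul_sq_le_of_mul_rpow_le {ξ μ S T : ℝ} (hξ : 0 ≤ ξ) (hμ : 0 ≤ μ)
    (hS : 0 ≤ S) (h : ξ * μ ^ ((2 : ℝ) / 3) * S ^ ((2 : ℝ) / 3) ≤ T) :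
    ξ ^ 3 * μ ^ 2 * S ^ 2 ≤ T ^ 3 := by
  have := pow_le_pow_left₀ (by positivity) h 3
  rw [mul_pow, mul_pow, ← Real.rpow_mul_natCast hμ, ← Real.rpow_mul_natCast hS] at this
  norm_num at this
  exact this

lemma four_mul_pow_four_mul_lt_pow_three_of_rpow_lt {M K ξ : ℝ} (hM : 0 ≤ M) (hK : 0 ≤ K)
    (h : M ^ ((4 : ℝ) / 3) * K ^ ((1 : ℝ) / 3) < ξ / (4 : ℝ) ^ ((1 : ℝ) / 3)) :
    4 * M ^ 4 * K < ξ ^ 3 := by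
  have := pow_lt_pow_left₀ h (by positivity) three_ne_zero
  rw [mul_pow, div_pow, ← Real.rpow_mul_natCast hM, ← Real.rpow_mul_natCast hK,
    ← Real.rpow_mul_natCast zero_le_four] at this
  norm_num at this
  linarith

theorem stmt_7_general {n m : ℕ} (hn : 0 < n) (hm : 0 < m)
    (a : Fin m → EuclideanSpace ℝ (Fin n)) (q : EuclideanSpace ℝ (Fin n))
    (M μ ξ : ℝ) (hq : ‖q‖ = 1)
    (haM : ∀ i, ‖a i‖ ≤ M)
    (htf : ∀ u : EuclideanSpace ℝ (Fin n),
      ∑ i, ⟪a i, u⟫ ^ 2 = ((m : ℝ) / n) * ‖u‖ ^ 2)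
    (hμ0 : 0 < μ) (hξ0 : 0 < ξ)
    (hcoh : ∀ i j, i ≠ j → |⟪‖a i‖⁻¹ • a i, ‖a j‖⁻¹ • a j⟫| ≤ μ)
    (hMK : M ^ ((4 : ℝ) / 3) * ((m : ℝ) / n) ^ ((1 : ℝ) / 3) < ξ / (4 : ℝ) ^ ((1 : ℝ) / 3))
    (hreg : ξ * μ ^ ((2 : ℝ) / 3) * (∑ i, |⟪a i, q⟫| ^ 3) ^ ((2 : ℝ) / 3)
      ≤ ∑ i, ⟪a i, q⟫ ^ 4) :
    ¬ ∀ i, |⟪a i, q⟫| <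
      2 * |(∑ j ∈ Finset.univ.erase i, ⟪a i, a j⟫ * ⟪a j, q⟫ ^ 3) / ‖a i‖ ^ 2| /
        ((∑ k, ⟪a k, q⟫ ^ 4) / ‖a i‖ ^ 2) := by
  intro h
  set K : ℝ := (m : ℝ) / n
  set S₃ := ∑ i, |⟪a i, q⟫| ^ 3
  set S₄ := ∑ i, ⟪a i, q⟫ ^ 4
  have hK : 0 < K := by positivity
  have hζK : ∑ i, ⟪a i, q⟫ ^ 2 = K := by simpa [hq] using htf q
  obtain ⟨i₀, -, hi₀⟩ := exists_ne_zero_of_sum_ne_zero (hζK ▸ hK.ne')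
  replace hi₀ := (pow_ne_zero_iff two_ne_zero).mp hi₀
  have hS₃ : 0 < S₃ := sum_pos' (fun i _ ↦ by positivity) ⟨i₀, mem_univ _, by positivity⟩
  have hS₄ : 0 < S₄ := sum_pos' (fun i _ ↦ by positivity) ⟨i₀, mem_univ _, by positivity⟩
  have hkey (i : Fin m) : |⟪a i, q⟫| * S₄ < 2 * μ * M ^ 2 * S₃ := by
    rw [mul_assoc 2, mul_assoc 2]
    exact mul_lt_two_mul_of_lt_two_mul_abs_div_div (h i)
      (abs_sum_erase_inner_mul_inner_pow_three_le q haM hμ0.le hcoh i) hS₄ (by positivity)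
  have hcube := hζK ▸ sum_pow_four_cube_lt ⟨i₀, hi₀⟩ hkey
  have hreg₃ := pow_three_mul_sq_mul_sq_le_of_mul_rpow_le hξ0.le hμ0.le hS₃.le hreg
  have hMK₃ := four_mul_pow_four_mul_lt_pow_three_of_rpow_lt
    ((norm_nonneg _).trans (haM i₀)) hK.le hMK
  refine lt_irrefl (ξ ^ 3 * (μ ^ 2 * S₃ ^ 2)) ?_
  calc ξ ^ 3 * (μ ^ 2 * S₃ ^ 2) ≤ S₄ ^ 3 := by linarith
    _ < K * (2 * μ * M ^ 2) ^ 2 * S₃ ^ 2 := hcube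
    _ = 4 * M ^ 4 * K * (μ ^ 2 * S₃ ^ 2) := by ring
    _ < ξ ^ 3 * (μ ^ 2 * S₃ ^ 2) := by gcongr

/-- Lemma `app-case-1` of Qu et al.: under the tight-frame, bounded-column, incoherence and
`M^{4/3} K^{1/3} < 4^{-1/3} ξ` assumptions, a point `q` in the region
`‖ζ‖₄⁴ ≥ ξ μ^{2/3} ‖ζ‖₃²` cannot have all coordinates `|ζ_i| < 2|β_i|/α_i`. -/
theorem stmt_7 {n m : ℕ} (hn : 0 < n) (hm : 0 < m)
    (a : Fin m → EuclideanSpace ℝ (Fin n)) (q : EuclideanSpace ℝ (Fin n))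
    (M μ ξ : ℝ) (hq : ‖q‖ = 1)
    (ha0 : ∀ i, a i ≠ 0)
    (haM : ∀ i, ‖a i‖ ≤ M)
    (htf : ∀ u : EuclideanSpace ℝ (Fin n),
      ∑ i, ⟪a i, u⟫ ^ 2 = ((m : ℝ) / n) * ‖u‖ ^ 2)
    (hμ0 : 0 < μ) (hξ0 : 0 < ξ)
    (hcoh : ∀ i j, i ≠ j → |⟪‖a i‖⁻¹ • a i, ‖a j‖⁻¹ • a j⟫| ≤ μ)
    (hMK : M ^ ((4 : ℝ) / 3) * ((m : ℝ) / n) ^ ((1 : ℝ) / 3) < ξ / (4 : ℝ) ^ ((1 : ℝ) / 3))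
    (hreg : ξ * μ ^ ((2 : ℝ) / 3) * (∑ i, |⟪a i, q⟫| ^ 3) ^ ((2 : ℝ) / 3)
      ≤ ∑ i, ⟪a i, q⟫ ^ 4) :
    ¬ ∀ i, |⟪a i, q⟫| <
      2 * |(∑ j ∈ Finset.univ.erase i, ⟪a i, a j⟫ * ⟪a j, q⟫ ^ 3) / ‖a i‖ ^ 2| /
        ((∑ k, ⟪a k, q⟫ ^ 4) / ‖a i‖ ^ 2) :=
  stmt_7_general hn hm a q M μ ξ hq haM htf hμ0 hξ0 hcoh hMK hreg
end

section
/- Let φ_T(q) = -(1/4)‖Aᵀq‖₄⁴ for q on the unit sphere S^{n-1} ⊂ ℝ^n, where A ∈ ℝ^{n×m}. If q ∈ S^{n-1} is a critical point of φ_T restricted to the sphere (i.e., the Riemannian gradient P_{q⊥} A ζ^{⊙3} = 0 where ζ = Aᵀq), then every coordinate ζ_i satisfies the cubic equation ζ_i³ - α_i ζ_i + β_i = 0, where α_i = ‖ζ‖₄⁴/‖a_i‖² and β_i = (∑_{j≠i}⟨a_i, a_j⟩ ζ_j³)/‖a_i‖². -/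
open RealInnerProductSpace

/-- Properties of critical points of `φ_T(q) = -(1/4)‖Aᵀq‖₄⁴` over the sphere:
if the Riemannian gradient `P_{q⊥} A ζ^{⊙3}` vanishes at a unit vector `q`, then each
coordinate `ζ_i = ⟪a_i, q⟫` satisfies `ζ_i³ - α_i ζ_i + β_i = 0`. -/
theorem stmt_8 {n m : ℕ} (a : Fin m → EuclideanSpace ℝ (Fin n))
    (q : EuclideanSpace ℝ (Fin n)) (hq : ‖q‖ = 1) (ha0 : ∀ i, a i ≠ 0)
    (hcrit : (∑ i, ⟪a i, q⟫ ^ 3 • a i) - ⟪q, ∑ i, ⟪a i, q⟫ ^ 3 • a i⟫ • q = 0) :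
    ∀ i, ⟪a i, q⟫ ^ 3
        - ((∑ k, ⟪a k, q⟫ ^ 4) / ‖a i‖ ^ 2) * ⟪a i, q⟫
        + (∑ j ∈ Finset.univ.erase i, ⟪a i, a j⟫ * ⟪a j, q⟫ ^ 3) / ‖a i‖ ^ 2 = 0 := by
  intro i
  have hlam : ⟪q, ∑ j, ⟪a j, q⟫ ^ 3 • a j⟫ = ∑ k, ⟪a k, q⟫ ^ 4 := by
    rw [inner_sum]
    refine Finset.sum_congr rfl fun k _ => ?_
    rw [real_inner_smul_right, real_inner_comm]
    ring
  have heq : ∑ j, ⟪a j, q⟫ ^ 3 • a j = (∑ k, ⟪a k, q⟫ ^ 4) • q := by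
    have := sub_eq_zero.mp hcrit
    rw [this, hlam]
  have hi : ∑ j, ⟪a i, a j⟫ * ⟪a j, q⟫ ^ 3 = (∑ k, ⟪a k, q⟫ ^ 4) * ⟪a i, q⟫ := by
    have h2 := congrArg (fun v => ⟪a i, v⟫) heq
    simp only [inner_sum, real_inner_smul_right] at h2
    rw [← h2]
    exact Finset.sum_congr rfl fun j _ => mul_comm _ _
  have hsplit : ∑ j, ⟪a i, a j⟫ * ⟪a j, q⟫ ^ 3
      = ⟪a i, a i⟫ * ⟪a i, q⟫ ^ 3 + ∑ j ∈ Finset.univ.erase i, ⟪a i, a j⟫ * ⟪a j, q⟫ ^ 3 := by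
    rw [← Finset.add_sum_erase _ _ (Finset.mem_univ i)]
  have hnorm : ⟪a i, a i⟫ = ‖a i‖ ^ 2 := real_inner_self_eq_norm_sq (a i)
  have hne : ‖a i‖ ^ 2 ≠ 0 := pow_ne_zero _ (norm_ne_zero_iff.mpr (ha0 i))
  rw [hsplit, hnorm] at hi
  set z := ⟪a i, q⟫
  set S := ∑ k, ⟪a k, q⟫ ^ 4
  set E := ∑ j ∈ Finset.univ.erase i, ⟪a i, a j⟫ * ⟪a j, q⟫ ^ 3
  set N := ‖a i‖ ^ 2
  field_simp
  linarith [hi]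
end

section
/- Let A ∈ ℝ^{n×m} be a tight frame with (1/K)·AAᵀ = I for K = m/n, with all columns of unit ℓ² norm and mutual coherence at most μ. Fix ξ > 0 and suppose K ≤ 3·(1 + 6μ + 6ξ^{3/5}μ^{2/5})^{-1}. Then for any unit vector q ∈ S^{n-1} with ‖ζ‖₄⁴ ≤ ξ μ^{2/3} ‖ζ‖₃² where ζ = Aᵀq, the first column a₁ (assumed to have |ζ₁| = ‖ζ‖_∞) satisfies a₁ᵀ Hess φ_T(q) a₁ < -4‖ζ‖₄⁴‖ζ‖_∞², where Hess φ_T(q) = -P_{q⊥}[3 A diag(ζ^{⊙2}) Aᵀ - ‖ζ‖₄⁴ I] P_{q⊥} is the Riemannian Hessian of φ_T(q) = -(1/4)‖Aᵀq‖₄⁴. -/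
open RealInnerProductSpace

set_option maxHeartbeats 1000000 in
/-- Auxiliary purely arithmetic inequality. -/
lemma stmt_9_aux {μ s t K B : ℝ} (hμ0 : 0 < μ) (hs0 : 0 < s) (ht_pos : 0 < t)
    (hK1 : 1 ≤ K) (hB0 : 0 ≤ B) (hBtK : B ≤ t * K) (ht2B : t ^ 2 ≤ B)
    (hB3' : B ^ 3 ≤ s ^ 5 * (t * K ^ 2)) (hK3 : K * (1 + 6 * μ + 6 * s) ≤ 3) :
    B * (1 + 3 * t) < 3 * t * (1 - t) ^ 2 := by
  have hK0 : (0:ℝ) < K := lt_of_lt_of_le one_pos hK1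
  have ht0 : (0:ℝ) ≤ t := ht_pos.le
  have hKμ : μ ≤ K * μ := le_mul_of_one_le_left hμ0.le hK1
  have hKs : s ≤ K * s := le_mul_of_one_le_left hs0.le hK1
  have hKle3 : K ≤ 3 := by nlinarith [mul_pos hK0 hμ0, mul_pos hK0 hs0]
  have hs13 : s ≤ 1 / 3 := by nlinarith
  rcases le_or_gt (15 * t) (6 * μ + 6 * s) with hc | hc
  · -- small t case: use B ≤ tK
    have h1 : 6 * μ + 6 * s ≤ 3 - K := by nlinarith
    have h2 : K * (1 + 3 * t) < 3 * (1 - t) ^ 2 := by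
      nlinarith [mul_le_mul_of_nonneg_right hKle3 ht0, mul_pos ht_pos ht_pos]
    calc B * (1 + 3 * t) ≤ t * K * (1 + 3 * t) :=
          mul_le_mul_of_nonneg_right hBtK (by linarith)
      _ = t * (K * (1 + 3 * t)) := by ring
      _ < t * (3 * (1 - t) ^ 2) := mul_lt_mul_of_pos_left h2 ht_pos
      _ = 3 * t * (1 - t) ^ 2 := by ring
  · -- large t case
    have h2s5t : 2 * s < 5 * t := by nlinarith
    have hK3' : K * (1 + 6 * s) ≤ 3 := by nlinarith [mul_pos hK0 hμ0]
    have hKs2 : (K * (1 + 6 * s)) ^ 2 ≤ 9 := by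
      nlinarith [mul_nonneg hK0.le (by positivity : (0:ℝ) ≤ 1 + 6 * s)]
    have ht5 : t ^ 5 ≤ s ^ 5 * K ^ 2 := by
      have h1 : t ^ 6 ≤ s ^ 5 * (t * K ^ 2) := by
        calc t ^ 6 = (t ^ 2) ^ 3 := by ring
          _ ≤ B ^ 3 := pow_le_pow_left₀ (by positivity) ht2B 3
          _ ≤ s ^ 5 * (t * K ^ 2) := hB3'
      have h2 : t ^ 6 = t ^ 5 * t := by ring
      have h3 : s ^ 5 * (t * K ^ 2) = s ^ 5 * K ^ 2 * t := by ring
      rw [h2, h3] at h1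
      exact le_of_mul_le_mul_right h1 ht_pos
    have hsq6 : (0:ℝ) < (1 + 6 * s) ^ 2 := by positivity
    have e1 : t ^ 5 * (1 + 6 * s) ^ 2 ≤ 9 * s ^ 5 := by
      calc t ^ 5 * (1 + 6 * s) ^ 2 ≤ s ^ 5 * K ^ 2 * (1 + 6 * s) ^ 2 :=
            mul_le_mul_of_nonneg_right ht5 hsq6.le
        _ = s ^ 5 * (K * (1 + 6 * s)) ^ 2 := by ring
        _ ≤ s ^ 5 * 9 := mul_le_mul_of_nonneg_left hKs2 (by positivity)
        _ = 9 * s ^ 5 := by ring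
    have e2a : 27 * s ^ 3 ≤ 1 := by nlinarith [mul_pos hs0 hs0, sq_nonneg (1 - 3 * s)]
    have e2b : 81 * s ^ 2 ≤ (1 + 6 * s) ^ 2 := by nlinarith
    have e2 : 2187 * s ^ 5 ≤ (1 + 6 * s) ^ 2 := by
      nlinarith [mul_le_mul e2a e2b (by positivity : (0:ℝ) ≤ 81 * s ^ 2) one_pos.le]
    have h9 : 243 * (t ^ 5 * (1 + 6 * s) ^ 2) ≤ (1 + 6 * s) ^ 2 := by linarith
    have ht243 : 243 * t ^ 5 ≤ 1 := by
      by_contra hcontra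
      push_neg at hcontra
      have := mul_lt_mul_of_pos_right hcontra hsq6
      nlinarith
    have ht13 : t ≤ 1 / 3 := by
      by_contra h
      push_neg at h
      have : (1/3 : ℝ) ^ 5 < t ^ 5 := pow_lt_pow_left₀ h (by norm_num) (by norm_num)
      nlinarith
    -- core polynomial inequality
    have f1 : t ^ 2 ≤ t / 3 := by nlinarith [ht13, ht0]
    have f2 : t ^ 3 ≤ t / 9 := by nlinarith [mul_le_mul_of_nonneg_left f1 ht0, f1]
    have e6 : (1 + 3 * t) ^ 3 ≤ 8 := by nlinarith [ht13, f1, f2]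
    have e7 : s ^ 2 ≤ 25 / 4 * t ^ 2 := by
      nlinarith [mul_le_mul h2s5t.le h2s5t.le (by positivity : (0:ℝ) ≤ 2 * s)
        (by positivity : (0:ℝ) ≤ 5 * t)]
    have f3 : s ^ 2 ≤ 1 / 9 := by nlinarith [hs13, hs0]
    have e8 : s ^ 3 ≤ s / 9 := by nlinarith [mul_le_mul_of_nonneg_left f3 hs0.le]
    have e9 : (2/3 : ℝ) ^ 6 ≤ (1 - t) ^ 6 :=
      pow_le_pow_left₀ (by norm_num) (by linarith) 6
    have e10 : 24 * s ≤ (1 + 6 * s) ^ 2 := by nlinarith [sq_nonneg (1 - 6 * s)]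
    have c1 : 9 * (s ^ 5 * (1 + 3 * t) ^ 3) ≤ 50 * (s * t ^ 2) := by
      calc 9 * (s ^ 5 * (1 + 3 * t) ^ 3) = 9 * ((1 + 3 * t) ^ 3 * s ^ 5) := by ring
        _ ≤ 9 * (8 * s ^ 5) := by
            apply mul_le_mul_of_nonneg_left _ (by norm_num)
            exact mul_le_mul_of_nonneg_right e6 (by positivity)
        _ = 72 * (s ^ 3 * s ^ 2) := by ring
        _ ≤ 72 * ((s / 9) * (25 / 4 * t ^ 2)) := by
            apply mul_le_mul_of_nonneg_left _ (by norm_num)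
            exact mul_le_mul e8 e7 (sq_nonneg s) (by positivity)
        _ = 50 * (s * t ^ 2) := by ring
    have c3 : 27 * t ^ 2 * ((2/3:ℝ) ^ 6 * (24 * s))
        ≤ 27 * t ^ 2 * ((1 - t) ^ 6 * (1 + 6 * s) ^ 2) := by
      apply mul_le_mul_of_nonneg_left _ (by positivity)
      exact mul_le_mul e9 e10 (by positivity) (by positivity)
    have hQ : 9 * (s ^ 5 * (1 + 3 * t) ^ 3) < 27 * t ^ 2 * ((1 - t) ^ 6 * (1 + 6 * s) ^ 2) := by
      have hst2 : (0:ℝ) < s * t ^ 2 := mul_pos hs0 (by positivity)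
      calc 9 * (s ^ 5 * (1 + 3 * t) ^ 3) ≤ 50 * (s * t ^ 2) := c1
        _ < 4608 / 81 * (s * t ^ 2) := by linarith
        _ = 27 * t ^ 2 * ((2/3:ℝ) ^ 6 * (24 * s)) := by ring
        _ ≤ 27 * t ^ 2 * ((1 - t) ^ 6 * (1 + 6 * s) ^ 2) := c3
    have hY0 : 0 < 3 * t * (1 - t) ^ 2 := by
      have h1t : (0:ℝ) < (1 - t) ^ 2 := pow_pos (by linarith) 2
      exact mul_pos (by linarith) h1t
    have hcube : (B * (1 + 3 * t)) ^ 3 < (3 * t * (1 - t) ^ 2) ^ 3 := by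
      have hKs2' : K ^ 2 * (1 + 6 * s) ^ 2 ≤ 9 := by
        calc K ^ 2 * (1 + 6 * s) ^ 2 = (K * (1 + 6 * s)) ^ 2 := by ring
          _ ≤ 9 := hKs2
      have hL : (B * (1 + 3 * t)) ^ 3 ≤ s ^ 5 * (t * K ^ 2) * (1 + 3 * t) ^ 3 := by
        calc (B * (1 + 3 * t)) ^ 3 = B ^ 3 * (1 + 3 * t) ^ 3 := by ring
          _ ≤ s ^ 5 * (t * K ^ 2) * (1 + 3 * t) ^ 3 :=
              mul_le_mul_of_nonneg_right hB3' (by positivity)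
      have hmul : s ^ 5 * K ^ 2 * (1 + 3 * t) ^ 3 * (1 + 6 * s) ^ 2
          < 27 * t ^ 2 * (1 - t) ^ 6 * (1 + 6 * s) ^ 2 := by
        calc s ^ 5 * K ^ 2 * (1 + 3 * t) ^ 3 * (1 + 6 * s) ^ 2
            = (K ^ 2 * (1 + 6 * s) ^ 2) * (s ^ 5 * (1 + 3 * t) ^ 3) := by ring
          _ ≤ 9 * (s ^ 5 * (1 + 3 * t) ^ 3) :=
              mul_le_mul_of_nonneg_right hKs2' (by positivity)
          _ < 27 * t ^ 2 * ((1 - t) ^ 6 * (1 + 6 * s) ^ 2) := hQ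
          _ = 27 * t ^ 2 * (1 - t) ^ 6 * (1 + 6 * s) ^ 2 := by ring
      have hmul2 : s ^ 5 * K ^ 2 * (1 + 3 * t) ^ 3 < 27 * t ^ 2 * (1 - t) ^ 6 := by
        by_contra hcontra
        push_neg at hcontra
        have := mul_le_mul_of_nonneg_right hcontra hsq6.le
        linarith
      calc (B * (1 + 3 * t)) ^ 3
          ≤ s ^ 5 * (t * K ^ 2) * (1 + 3 * t) ^ 3 := hL
        _ = t * (s ^ 5 * K ^ 2 * (1 + 3 * t) ^ 3) := by ring
        _ < t * (27 * t ^ 2 * (1 - t) ^ 6) := mul_lt_mul_of_pos_left hmul2 ht_pos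
        _ = (3 * t * (1 - t) ^ 2) ^ 3 := by ring
    exact lt_of_pow_lt_pow_left₀ 3 hY0.le hcube

set_option maxHeartbeats 1600000 in
/-- Negative curvature in the region `R_N`: for a unit-norm tight frame `A` with coherence `μ`
and `K = m/n ≤ 3(1 + 6μ + 6ξ^{3/5}μ^{2/5})⁻¹`, at any unit `q` with
`‖ζ‖₄⁴ ≤ ξ μ^{2/3} ‖ζ‖₃²` (where `ζ = Aᵀq`), the column `a_{i₀}` achieving `|ζ_{i₀}| = ‖ζ‖_∞`
gives a Riemannian Hessian quadratic form `a_{i₀}ᵀ Hess φ_T(q) a_{i₀} < -4‖ζ‖₄⁴‖ζ‖_∞²`,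
where `vᵀ Hess φ_T(q) v = -(3 ∑ᵢ ζᵢ² ⟪aᵢ, P_{q⊥}v⟫² - ‖ζ‖₄⁴ ‖P_{q⊥}v‖²)`. -/
theorem stmt_9 {n m : ℕ} (a : Fin m → EuclideanSpace ℝ (Fin n))
    (q : EuclideanSpace ℝ (Fin n)) (μ ξ : ℝ) (i₀ : Fin m)
    (hq : ‖q‖ = 1)
    (hcol : ∀ i, ‖a i‖ = 1)
    (htf : ∀ u : EuclideanSpace ℝ (Fin n),
      ∑ i, ⟪a i, u⟫ ^ 2 = ((m : ℝ) / n) * ‖u‖ ^ 2)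
    (hμ0 : 0 < μ) (hξ0 : 0 < ξ)
    (hcoh : ∀ i j, i ≠ j → |⟪a i, a j⟫| ≤ μ)
    (hK : (m : ℝ) / n ≤ 3 * (1 + 6 * μ + 6 * ξ ^ ((3 : ℝ) / 5) * μ ^ ((2 : ℝ) / 5))⁻¹)
    (hmax : ∀ i, |⟪a i, q⟫| ≤ |⟪a i₀, q⟫|)
    (hreg : ∑ i, ⟪a i, q⟫ ^ 4
      ≤ ξ * μ ^ ((2 : ℝ) / 3) * (∑ i, |⟪a i, q⟫| ^ 3) ^ ((2 : ℝ) / 3)) :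
    -(3 * ∑ i, ⟪a i, q⟫ ^ 2 * ⟪a i, a i₀ - ⟪q, a i₀⟫ • q⟫ ^ 2
        - (∑ i, ⟪a i, q⟫ ^ 4) * ‖a i₀ - ⟪q, a i₀⟫ • q‖ ^ 2)
      < -(4 * (∑ i, ⟪a i, q⟫ ^ 4) * |⟪a i₀, q⟫| ^ 2) := by
  set K : ℝ := (m : ℝ) / n with hKdef
  set s : ℝ := ξ ^ ((3 : ℝ) / 5) * μ ^ ((2 : ℝ) / 5) with hsdef
  set t : ℝ := ⟪a i₀, q⟫ ^ 2 with htdef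
  set B : ℝ := ∑ i, ⟪a i, q⟫ ^ 4 with hBdef
  set T : ℝ := ∑ i, |⟪a i, q⟫| ^ 3 with hTdef
  have hs0 : 0 < s := mul_pos (Real.rpow_pos_of_pos hξ0 _) (Real.rpow_pos_of_pos hμ0 _)
  -- K ≥ 1
  have hK1 : (1 : ℝ) ≤ K := by
    have h := htf (a i₀)
    rw [hcol i₀] at h
    have h1 : (⟪a i₀, a i₀⟫ : ℝ) ^ 2 ≤ ∑ i, ⟪a i, a i₀⟫ ^ 2 :=
      Finset.single_le_sum (f := fun i => (⟪a i, a i₀⟫ : ℝ) ^ 2)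
        (fun i _ => sq_nonneg _) (Finset.mem_univ i₀)
    have h2 : ⟪a i₀, a i₀⟫ = (1 : ℝ) := by
      rw [real_inner_self_eq_norm_sq, hcol i₀]; norm_num
    rw [h2, h] at h1
    nlinarith
  have hK0 : 0 < K := lt_of_lt_of_le one_pos hK1
  -- sum of squares = K
  have hsum2 : ∑ i, ⟪a i, q⟫ ^ 2 = K := by
    have h := htf q
    rw [hq] at h
    simpa using h
  have ht0 : 0 ≤ t := sq_nonneg _
  have hζsq : ∀ i, ⟪a i, q⟫ ^ 2 ≤ t := by
    intro i
    calc ⟪a i, q⟫ ^ 2 = |⟪a i, q⟫| ^ 2 := (sq_abs _).symm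
      _ ≤ |⟪a i₀, q⟫| ^ 2 := pow_le_pow_left₀ (abs_nonneg _) (hmax i) 2
      _ = t := sq_abs _
  -- t > 0
  have ht_pos : 0 < t := by
    rcases lt_or_eq_of_le ht0 with h | h
    · exact h
    · exfalso
      have hz : ∀ i, ⟪a i, q⟫ ^ 2 = 0 := fun i => le_antisymm (h ▸ hζsq i) (sq_nonneg _)
      have hzz : (∑ i, ⟪a i, q⟫ ^ 2) = 0 := Finset.sum_eq_zero fun i _ => hz i
      rw [hsum2] at hzz
      linarith
  -- B ≤ t * K
  have hB0 : 0 ≤ B := Finset.sum_nonneg fun i _ => by positivity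
  have hBtK : B ≤ t * K := by
    have h : B ≤ ∑ i, t * ⟪a i, q⟫ ^ 2 := by
      apply Finset.sum_le_sum
      intro i _
      have h4 : ⟪a i, q⟫ ^ 4 = ⟪a i, q⟫ ^ 2 * ⟪a i, q⟫ ^ 2 := by ring
      rw [h4]
      exact mul_le_mul_of_nonneg_right (hζsq i) (sq_nonneg _)
    rwa [← Finset.mul_sum, hsum2] at h
  -- t^2 ≤ B
  have ht2B : t ^ 2 ≤ B := by
    have h := Finset.single_le_sum (f := fun i => (⟪a i, q⟫ : ℝ) ^ 4)
      (fun i _ => by positivity) (Finset.mem_univ i₀)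
    calc t ^ 2 = ⟪a i₀, q⟫ ^ 4 := by rw [htdef]; ring
      _ ≤ B := h
  -- T ≤ |ζ i₀| * K and T ≥ 0
  have hT0 : 0 ≤ T := Finset.sum_nonneg fun i _ => by positivity
  have hTK : T ≤ |⟪a i₀, q⟫| * K := by
    have h : T ≤ ∑ i, |⟪a i₀, q⟫| * ⟪a i, q⟫ ^ 2 := by
      apply Finset.sum_le_sum
      intro i _
      have h1 : |⟪a i, q⟫| ^ 3 = |⟪a i, q⟫| * ⟪a i, q⟫ ^ 2 := by
        rw [← sq_abs]; ring
      rw [h1]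
      exact mul_le_mul_of_nonneg_right (hmax i) (sq_nonneg _)
    rwa [← Finset.mul_sum, hsum2] at h
  -- s^5 = ξ^3 μ^2
  have hs5 : s ^ 5 = ξ ^ 3 * μ ^ 2 := by
    rw [hsdef, mul_pow, ← Real.rpow_natCast (ξ ^ ((3:ℝ)/5)) 5,
      ← Real.rpow_natCast (μ ^ ((2:ℝ)/5)) 5, ← Real.rpow_mul hξ0.le,
      ← Real.rpow_mul hμ0.le, ← Real.rpow_natCast ξ 3, ← Real.rpow_natCast μ 2]
    norm_num
  -- B^3 ≤ s^5 * T^2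
  have hB3 : B ^ 3 ≤ s ^ 5 * T ^ 2 := by
    have h1 : B ^ 3 ≤ (ξ * μ ^ ((2:ℝ)/3) * T ^ ((2:ℝ)/3)) ^ 3 :=
      pow_le_pow_left₀ hB0 hreg 3
    have h2 : (ξ * μ ^ ((2:ℝ)/3) * T ^ ((2:ℝ)/3)) ^ 3 = ξ ^ 3 * μ ^ 2 * T ^ 2 := by
      rw [mul_pow, mul_pow, ← Real.rpow_natCast (μ ^ ((2:ℝ)/3)) 3,
        ← Real.rpow_natCast (T ^ ((2:ℝ)/3)) 3, ← Real.rpow_mul hμ0.le,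
        ← Real.rpow_mul hT0, ← Real.rpow_natCast μ 2, ← Real.rpow_natCast T 2]
      norm_num
    rw [h2] at h1
    rw [hs5]
    linarith
  -- B^3 ≤ s^5 * (t * K^2)
  have hB3' : B ^ 3 ≤ s ^ 5 * (t * K ^ 2) := by
    have hT2 : T ^ 2 ≤ t * K ^ 2 := by
      have h1 : T ^ 2 ≤ (|⟪a i₀, q⟫| * K) ^ 2 := pow_le_pow_left₀ hT0 hTK 2
      calc T ^ 2 ≤ (|⟪a i₀, q⟫| * K) ^ 2 := h1
        _ = |⟪a i₀, q⟫| ^ 2 * K ^ 2 := by ring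
        _ = t * K ^ 2 := by rw [sq_abs]
    calc B ^ 3 ≤ s ^ 5 * T ^ 2 := hB3
      _ ≤ s ^ 5 * (t * K ^ 2) := mul_le_mul_of_nonneg_left hT2 (by positivity)
  -- hK in product form
  have hpos : (0:ℝ) < 1 + 6 * μ + 6 * s := by positivity
  have hK3 : K * (1 + 6 * μ + 6 * s) ≤ 3 := by
    have hKeq : (1 : ℝ) + 6 * μ + 6 * ξ ^ ((3:ℝ)/5) * μ ^ ((2:ℝ)/5) = 1 + 6 * μ + 6 * s := by
      rw [hsdef]; ring
    have hK' : K ≤ 3 * (1 + 6 * μ + 6 * s)⁻¹ := by rw [← hKeq]; exact hK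
    have h := mul_le_mul_of_nonneg_right hK' hpos.le
    rwa [mul_assoc, inv_mul_cancel₀ hpos.ne', mul_one] at h
  -- key inequality: B * (1 + 3t) < 3 * t * (1-t)^2
  have key : B * (1 + 3 * t) < 3 * t * (1 - t) ^ 2 :=
    stmt_9_aux hμ0 hs0 ht_pos hK1 hB0 hBtK ht2B hB3' hK3
  -- geometric identities
  have hqa : ⟪q, a i₀⟫ = (⟪a i₀, q⟫ : ℝ) := real_inner_comm _ _
  have haa : ⟪a i₀, a i₀⟫ = (1 : ℝ) := by
    rw [real_inner_self_eq_norm_sq, hcol i₀]; norm_num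
  have hv1 : ⟪a i₀, a i₀ - ⟪q, a i₀⟫ • q⟫ = 1 - t := by
    rw [inner_sub_right, real_inner_smul_right, hqa, haa, htdef]; ring
  have hvn : ‖a i₀ - ⟪q, a i₀⟫ • q‖ ^ 2 = 1 - t := by
    rw [norm_sub_sq_real, hcol i₀, real_inner_smul_right, norm_smul, hqa, hq, htdef,
      Real.norm_eq_abs, mul_one, one_pow, sq_abs]
    ring
  have habs : |⟪a i₀, q⟫| ^ 2 = t := sq_abs _
  have hsumlb : t * (1 - t) ^ 2 ≤ ∑ i, ⟪a i, q⟫ ^ 2 * ⟪a i, a i₀ - ⟪q, a i₀⟫ • q⟫ ^ 2 := by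
    have h : (⟪a i₀, q⟫ : ℝ) ^ 2 * ⟪a i₀, a i₀ - ⟪q, a i₀⟫ • q⟫ ^ 2
        ≤ ∑ i, ⟪a i, q⟫ ^ 2 * ⟪a i, a i₀ - ⟪q, a i₀⟫ • q⟫ ^ 2 :=
      Finset.single_le_sum
        (f := fun i => (⟪a i, q⟫ : ℝ) ^ 2 * ⟪a i, a i₀ - ⟪q, a i₀⟫ • q⟫ ^ 2)
        (fun i _ => by positivity) (Finset.mem_univ i₀)
    rw [hv1] at h
    calc t * (1 - t) ^ 2 = ⟪a i₀, q⟫ ^ 2 * (1 - t) ^ 2 := by rw [htdef]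
      _ ≤ _ := by exact h
  rw [neg_lt_neg_iff, hvn, habs]
  nlinarith [key, hsumlb]
end

section
/- Let x = b ⊙ g ∈ ℝ^m with b having i.i.d. Bernoulli(θ) entries and g ~ N(0, I_m) independent, and let ζ ∈ ℝ^m be a fixed vector. Then E[(ζᵀx)⁴] = 3θ(1-θ)‖ζ‖₄⁴ + 3θ²‖ζ‖₂⁴. -/
open MeasureTheory ProbabilityTheory Real Set
open scoped NNReal ENNReal

namespace Stmt11Aux

noncomputable def bernM (θ : ℝ) : Measure ℝ :=
  θ.toNNReal • Measure.dirac (1 : ℝ) + (1 - θ).toNNReal • Measure.dirac (0 : ℝ)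

noncomputable def nuM (θ : ℝ) : Measure (ℝ × ℝ) := (bernM θ).prod (gaussianReal 0 1)

/-! ### Gaussian moments -/

lemma integrable_pow_exp (n : ℕ) :
    Integrable (fun x : ℝ => x ^ n * Real.exp (-(2:ℝ)⁻¹ * x ^ 2)) := by
  simpa [Real.rpow_natCast] using
    integrable_rpow_mul_exp_neg_mul_sq (by norm_num : (0:ℝ) < 2⁻¹) (s := (n:ℝ))
      (by exact lt_of_lt_of_le (by norm_num) (Nat.cast_nonneg n) : (-1:ℝ) < (n:ℝ))

lemma odd_moment (n : ℕ) (hn : Odd n) :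
    ∫ x : ℝ, x ^ n * Real.exp (-(2:ℝ)⁻¹ * x ^ 2) = 0 := by
  set f : ℝ → ℝ := fun x => x ^ n * Real.exp (-(2:ℝ)⁻¹ * x ^ 2) with hf
  have h1 : ∫ x : ℝ, f (-x) = ∫ x : ℝ, f x :=
    (Measure.measurePreserving_neg (volume : Measure ℝ)).integral_comp
      (Homeomorph.neg ℝ).measurableEmbedding f
  have h2 : ∀ x : ℝ, f (-x) = - f x := by
    intro x; simp only [hf, neg_sq, Odd.neg_pow hn, neg_mul]
  simp_rw [h2, integral_neg] at h1
  linarith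

lemma ioi_moment (q : ℕ) : ∫ x in Ioi (0:ℝ), x ^ q * Real.exp (-(2:ℝ)⁻¹ * x ^ 2)
    = (2:ℝ) ^ (((q:ℝ) + 1) / 2) * (1 / 2) * Real.Gamma (((q:ℝ) + 1) / 2) := by
  have h := integral_rpow_mul_exp_neg_mul_rpow (p := 2) (q := (q:ℝ)) (b := 2⁻¹)
    (by norm_num) (lt_of_lt_of_le (by norm_num) (Nat.cast_nonneg q)) (by norm_num)
  rw [show ∫ x in Ioi (0:ℝ), x ^ q * Real.exp (-(2:ℝ)⁻¹ * x ^ 2)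
      = ∫ x in Ioi (0:ℝ), x ^ (q:ℝ) * Real.exp (-2⁻¹ * x ^ (2:ℝ)) by
    refine setIntegral_congr_fun measurableSet_Ioi fun x hx => ?_
    rw [← Real.rpow_natCast x q, ← Real.rpow_natCast x 2]; norm_num, h]
  congr 1
  rw [Real.inv_rpow (by norm_num), ← Real.rpow_neg (by norm_num)]
  norm_num
  congr 1
  ring

lemma even_moment (k : ℕ) : ∫ x : ℝ, x ^ (2 * k) * Real.exp (-(2:ℝ)⁻¹ * x ^ 2)
    = 2 * ((2:ℝ) ^ ((2 * (k:ℝ) + 1) / 2) * (1 / 2) * Real.Gamma ((2 * (k:ℝ) + 1) / 2)) := by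
  have h : (fun x : ℝ => x ^ (2 * k) * Real.exp (-(2:ℝ)⁻¹ * x ^ 2))
      = fun x : ℝ => |x| ^ (2 * k) * Real.exp (-(2:ℝ)⁻¹ * |x| ^ 2) := by
    funext x
    rw [pow_mul, pow_mul, sq_abs]
  rw [h, integral_comp_abs (f := fun x : ℝ => x ^ (2 * k) * Real.exp (-(2:ℝ)⁻¹ * x ^ 2)),
    ioi_moment]
  norm_num

lemma moment2 : ∫ x : ℝ, x ^ 2 * Real.exp (-(2:ℝ)⁻¹ * x ^ 2) = Real.sqrt (2 * Real.pi) := by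
  have h := even_moment 1
  norm_num only at h
  rw [show (-(2:ℝ)⁻¹ : ℝ) = -(1/2) by norm_num, h]
  have h32 : (2:ℝ) ^ ((3:ℝ)/2) = 2 * Real.sqrt 2 := by
    rw [show (3:ℝ)/2 = 1 + 1/2 by norm_num, Real.rpow_add (by norm_num), Real.rpow_one,
      ← Real.sqrt_eq_rpow]
  have hg : Real.Gamma ((3:ℝ)/2) = Real.sqrt Real.pi / 2 := by
    rw [show (3:ℝ)/2 = 1/2 + 1 by norm_num, Real.Gamma_add_one (by norm_num),
      Real.Gamma_one_half_eq]
    ring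
  rw [h32, hg, Real.sqrt_mul (by norm_num)]
  ring

lemma moment4 : ∫ x : ℝ, x ^ 4 * Real.exp (-(2:ℝ)⁻¹ * x ^ 2)
    = 3 * Real.sqrt (2 * Real.pi) := by
  have h := even_moment 2
  norm_num only at h
  rw [show (-(2:ℝ)⁻¹ : ℝ) = -(1/2) by norm_num, h]
  have h52 : (2:ℝ) ^ ((5:ℝ)/2) = 4 * Real.sqrt 2 := by
    rw [show (5:ℝ)/2 = 2 + 1/2 by norm_num, Real.rpow_add (by norm_num), ← Real.sqrt_eq_rpow]
    norm_num [Real.rpow_two]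
  have hg : Real.Gamma ((5:ℝ)/2) = 3 * Real.sqrt Real.pi / 4 := by
    rw [show (5:ℝ)/2 = 3/2 + 1 by norm_num, Real.Gamma_add_one (by norm_num),
      show (3:ℝ)/2 = 1/2 + 1 by norm_num, Real.Gamma_add_one (by norm_num),
      Real.Gamma_one_half_eq]
    ring
  rw [h52, hg, Real.sqrt_mul (by norm_num)]
  ring

lemma gauss_integral_eq (f : ℝ → ℝ) :
    ∫ x, f x ∂(gaussianReal 0 1) = ∫ x, gaussianPDFReal 0 1 x * f x := by
  rw [gaussianReal_of_var_ne_zero _ one_ne_zero,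
    show gaussianPDF 0 1 = (fun x => ((Real.toNNReal (gaussianPDFReal 0 1 x) : ℝ≥0) : ℝ≥0∞))
      from rfl,
    integral_withDensity_eq_integral_smul ((measurable_gaussianPDFReal 0 1).real_toNNReal) f]
  congr 1
  funext x
  rw [NNReal.smul_def, Real.coe_toNNReal _ (gaussianPDFReal_nonneg 0 1 x), smul_eq_mul]

lemma pdf_eq (x : ℝ) :
    gaussianPDFReal 0 1 x = (Real.sqrt (2 * Real.pi))⁻¹ * Real.exp (-(2:ℝ)⁻¹ * x ^ 2) := by
  rw [gaussianPDFReal]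
  norm_num
  left
  ring_nf

lemma sqrt2pi_ne : Real.sqrt (2 * Real.pi) ≠ 0 := by
  positivity

lemma gauss_pow (n : ℕ) : ∫ x, x ^ n ∂(gaussianReal 0 1)
    = (Real.sqrt (2 * Real.pi))⁻¹ * ∫ x : ℝ, x ^ n * Real.exp (-(2:ℝ)⁻¹ * x ^ 2) := by
  rw [gauss_integral_eq (fun x => x ^ n)]
  rw [show (fun x => gaussianPDFReal 0 1 x * x ^ n)
      = fun x => (Real.sqrt (2 * Real.pi))⁻¹ * (x ^ n * Real.exp (-(2:ℝ)⁻¹ * x ^ 2)) by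
    funext x; rw [pdf_eq]; ring]
  exact integral_const_mul _ _

lemma gauss_m1 : ∫ x, x ^ 1 ∂(gaussianReal 0 1) = 0 := by
  rw [gauss_pow, odd_moment 1 (by decide), mul_zero]

lemma gauss_m3 : ∫ x, x ^ 3 ∂(gaussianReal 0 1) = 0 := by
  rw [gauss_pow, odd_moment 3 (by decide), mul_zero]

lemma gauss_m2 : ∫ x, x ^ 2 ∂(gaussianReal 0 1) = 1 := by
  rw [gauss_pow, moment2, inv_mul_cancel₀ sqrt2pi_ne]

lemma gauss_m4 : ∫ x, x ^ 4 ∂(gaussianReal 0 1) = 3 := by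
  rw [gauss_pow, moment4]
  field_simp

lemma gauss_int_pow (n : ℕ) : Integrable (fun x => x ^ n) (gaussianReal 0 1) := by
  rw [gaussianReal_of_var_ne_zero _ one_ne_zero]
  rw [integrable_withDensity_iff (measurable_gaussianPDF 0 1)
    (Filter.Eventually.of_forall fun x => ENNReal.ofReal_lt_top)]
  have h : (fun x : ℝ => x ^ n * (gaussianPDF 0 1 x).toReal)
      = fun x => (Real.sqrt (2 * Real.pi))⁻¹ * (x ^ n * Real.exp (-(2:ℝ)⁻¹ * x ^ 2)) := by
    funext x
    rw [gaussianPDF, ENNReal.toReal_ofReal (gaussianPDFReal_nonneg 0 1 x), pdf_eq]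
    ring
  rw [h]
  exact (integrable_pow_exp n).const_mul _

/-! ### Bernoulli measure -/

variable {θ : ℝ}

lemma dirac_integrable (f : ℝ → ℝ) (a : ℝ) : Integrable f (Measure.dirac a) := by
  refine Integrable.congr (integrable_const (f a)) ?_
  rw [Filter.EventuallyEq, ae_dirac_eq]
  simp

lemma smul1_integrable (f : ℝ → ℝ) (a : ℝ) (c : ℝ≥0) :
    Integrable f (c • Measure.dirac a) := by
  rw [ENNReal.smul_def]
  exact (dirac_integrable f a).smul_measure (by simp)

lemma bern_integrable {f : ℝ → ℝ} : Integrable f (bernM θ) :=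
  (smul1_integrable f 1 _).add_measure (smul1_integrable f 0 _)

lemma bern_prob (h0 : 0 ≤ θ) (h1 : θ ≤ 1) : IsProbabilityMeasure (bernM θ) := by
  constructor
  rw [bernM]
  simp only [Measure.coe_add, Pi.add_apply, Measure.coe_smul, Pi.smul_apply,
    measure_univ, smul_eq_mul, mul_one]
  rw [ENNReal.smul_def, ENNReal.smul_def, smul_eq_mul, smul_eq_mul, mul_one, mul_one,
    show ((θ.toNNReal : ℝ≥0∞)) = ENNReal.ofReal θ from rfl,
    show (((1 - θ).toNNReal : ℝ≥0∞)) = ENNReal.ofReal (1 - θ) from rfl,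
    ← ENNReal.ofReal_add h0 (by linarith)]
  norm_num

lemma bern_integral (h0 : 0 ≤ θ) (h1 : θ ≤ 1) (f : ℝ → ℝ) :
    ∫ x, f x ∂(bernM θ) = θ * f 1 + (1 - θ) * f 0 := by
  rw [bernM, integral_add_measure (smul1_integrable f 1 _) (smul1_integrable f 0 _),
    ENNReal.smul_def, ENNReal.smul_def, integral_smul_measure, integral_smul_measure,
    integral_dirac, integral_dirac]
  simp only [smul_eq_mul]
  rw [show ((θ.toNNReal : ℝ≥0∞)).toReal = θ from by
    simp [ENNReal.coe_toReal, Real.coe_toNNReal _ h0],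
    show (((1 - θ).toNNReal : ℝ≥0∞)).toReal = 1 - θ from by
    simp [ENNReal.coe_toReal, Real.coe_toNNReal _ (by linarith : (0:ℝ) ≤ 1 - θ)]]

/-! ### Coordinate measure `nuM` -/

lemma nu_prob (h0 : 0 ≤ θ) (h1 : θ ≤ 1) : IsProbabilityMeasure (nuM θ) := by
  haveI := bern_prob h0 h1
  rw [nuM]
  infer_instance

lemma coord_integrable (h0 : 0 ≤ θ) (h1 : θ ≤ 1) (c : ℝ) (n : ℕ) :
    Integrable (fun p : ℝ × ℝ => (c * p.1 * p.2) ^ n) (nuM θ) := by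
  haveI := bern_prob h0 h1
  have h : (fun p : ℝ × ℝ => (c * p.1 * p.2) ^ n)
      = fun p : ℝ × ℝ => (c ^ n * p.1 ^ n) * p.2 ^ n := by
    funext p; ring
  rw [h, nuM]
  exact Integrable.mul_prod (bern_integrable (f := fun x => c ^ n * x ^ n)) (gauss_int_pow n)

lemma coord_moment (h0 : 0 ≤ θ) (h1 : θ ≤ 1) (c : ℝ) (n : ℕ) (hn : n ≠ 0) :
    ∫ p : ℝ × ℝ, (c * p.1 * p.2) ^ n ∂(nuM θ)
      = c ^ n * θ * ∫ x, x ^ n ∂(gaussianReal 0 1) := by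
  haveI := bern_prob h0 h1
  have h : (fun p : ℝ × ℝ => (c * p.1 * p.2) ^ n)
      = fun p : ℝ × ℝ => (c ^ n * p.1 ^ n) * p.2 ^ n := by
    funext p; ring
  rw [h, nuM, integral_prod_mul (fun x => c ^ n * x ^ n) (fun y => y ^ n),
    bern_integral h0 h1]
  rw [one_pow, zero_pow hn]
  ring

lemma coord_m0 (h0 : 0 ≤ θ) (h1 : θ ≤ 1) (c : ℝ) :
    ∫ p : ℝ × ℝ, (c * p.1 * p.2) ^ 0 ∂(nuM θ) = 1 := by
  haveI := nu_prob h0 h1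
  simp

lemma coord_m1 (h0 : 0 ≤ θ) (h1 : θ ≤ 1) (c : ℝ) :
    ∫ p : ℝ × ℝ, (c * p.1 * p.2) ^ 1 ∂(nuM θ) = 0 := by
  rw [coord_moment h0 h1 c 1 one_ne_zero, gauss_m1, mul_zero]

lemma coord_m2 (h0 : 0 ≤ θ) (h1 : θ ≤ 1) (c : ℝ) :
    ∫ p : ℝ × ℝ, (c * p.1 * p.2) ^ 2 ∂(nuM θ) = θ * c ^ 2 := by
  rw [coord_moment h0 h1 c 2 two_ne_zero, gauss_m2]
  ring

lemma coord_m3 (h0 : 0 ≤ θ) (h1 : θ ≤ 1) (c : ℝ) :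
    ∫ p : ℝ × ℝ, (c * p.1 * p.2) ^ 3 ∂(nuM θ) = 0 := by
  rw [coord_moment h0 h1 c 3 three_ne_zero, gauss_m3, mul_zero]

lemma coord_m4 (h0 : 0 ≤ θ) (h1 : θ ≤ 1) (c : ℝ) :
    ∫ p : ℝ × ℝ, (c * p.1 * p.2) ^ 4 ∂(nuM θ) = 3 * θ * c ^ 4 := by
  rw [coord_moment h0 h1 c 4 four_ne_zero, gauss_m4]
  ring

/-! ### Product over coordinates -/

lemma pi_integrable (h0 : 0 ≤ θ) (h1 : θ ≤ 1) : ∀ (n : ℕ) (ζ : Fin n → ℝ) (k : ℕ),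
    Integrable (fun p : Fin n → ℝ × ℝ => (∑ i, ζ i * (p i).1 * (p i).2) ^ k)
      (Measure.pi fun _ : Fin n => nuM θ) := by
  haveI := nu_prob h0 h1
  intro n
  induction n with
  | zero =>
      intro ζ k
      simp only [Finset.univ_eq_empty, Finset.sum_empty]
      exact integrable_const _
  | succ n ih =>
      intro ζ k
      have hmp := (measurePreserving_piFinSuccAbove (fun _ : Fin (n + 1) => nuM θ) 0).symm
      rw [← hmp.integrable_comp_emb (MeasurableEquiv.measurableEmbedding _)]
      simp only [MeasurableEquiv.piFinSuccAbove_symm_apply, Function.comp_def,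
        Fin.insertNthEquiv_apply, Fin.insertNth_zero', Fin.sum_univ_succ,
        Fin.cons_zero, Fin.cons_succ]
      simp_rw [add_pow]
      apply integrable_finset_sum
      intro j hj
      exact ((coord_integrable h0 h1 (ζ 0) j).mul_prod
        (ih (fun i => ζ i.succ) (k - j))).mul_const _

lemma pi_m0 (h0 : 0 ≤ θ) (h1 : θ ≤ 1) (n : ℕ) (ζ : Fin n → ℝ) :
    ∫ p : Fin n → ℝ × ℝ, (∑ i, ζ i * (p i).1 * (p i).2) ^ 0
      ∂(Measure.pi fun _ : Fin n => nuM θ) = 1 := by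
  haveI := nu_prob h0 h1
  simp

lemma pi_moment (h0 : 0 ≤ θ) (h1 : θ ≤ 1) : ∀ (n : ℕ) (ζ : Fin n → ℝ),
    (∫ p : Fin n → ℝ × ℝ, (∑ i, ζ i * (p i).1 * (p i).2) ^ 2
        ∂(Measure.pi fun _ : Fin n => nuM θ) = θ * ∑ i, ζ i ^ 2) ∧
    (∫ p : Fin n → ℝ × ℝ, (∑ i, ζ i * (p i).1 * (p i).2) ^ 4
        ∂(Measure.pi fun _ : Fin n => nuM θ)
      = 3 * θ * (1 - θ) * ∑ i, ζ i ^ 4 + 3 * θ ^ 2 * (∑ i, ζ i ^ 2) ^ 2) := by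
  haveI := nu_prob h0 h1
  intro n
  induction n with
  | zero =>
      intro ζ
      constructor <;> simp
  | succ n ih =>
      intro ζ
      have hmp := (measurePreserving_piFinSuccAbove (fun _ : Fin (n + 1) => nuM θ) 0).symm
      obtain ⟨ih2, ih4⟩ := ih (fun i => ζ i.succ)
      -- notation
      set μn : Measure (Fin n → ℝ × ℝ) := Measure.pi fun _ : Fin n => nuM θ with hμn
      set S : (Fin n → ℝ × ℝ) → ℝ := fun p => ∑ i, ζ i.succ * (p i).1 * (p i).2 with hS
      set X : ℝ × ℝ → ℝ := fun q => ζ 0 * q.1 * q.2 with hX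
      have key : ∀ k : ℕ,
          ∫ p : Fin (n + 1) → ℝ × ℝ, (∑ i, ζ i * (p i).1 * (p i).2) ^ k
              ∂(Measure.pi fun _ : Fin (n + 1) => nuM θ)
            = ∫ z : (ℝ × ℝ) × (Fin n → ℝ × ℝ), (X z.1 + S z.2) ^ k ∂((nuM θ).prod μn) := by
        intro k
        rw [← hmp.integral_comp']
        simp only [MeasurableEquiv.piFinSuccAbove_symm_apply, Function.comp_def,
          Fin.insertNthEquiv_apply, Fin.insertNth_zero', Fin.sum_univ_succ,
          Fin.cons_zero, Fin.cons_succ]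
        rfl
      have hIS : ∀ k : ℕ, Integrable (fun p => S p ^ k) μn :=
        fun k => pi_integrable h0 h1 n (fun i => ζ i.succ) k
      have hIX : ∀ k : ℕ, Integrable (fun q => X q ^ k) (nuM θ) :=
        fun k => coord_integrable h0 h1 (ζ 0) k
      constructor
      · -- second moment
        rw [key 2]
        have hexp : (fun z : (ℝ × ℝ) × (Fin n → ℝ × ℝ) => (X z.1 + S z.2) ^ 2)
            = fun z => X z.1 ^ 2 * S z.2 ^ 0
                + ((2 * X z.1 ^ 1) * S z.2 ^ 1 + X z.1 ^ 0 * S z.2 ^ 2) := by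
          funext z; ring
        have i1 : Integrable (fun z : (ℝ × ℝ) × (Fin n → ℝ × ℝ) => X z.1 ^ 2 * S z.2 ^ 0)
            ((nuM θ).prod μn) := (hIX 2).mul_prod (hIS 0)
        have i2 : Integrable (fun z : (ℝ × ℝ) × (Fin n → ℝ × ℝ) => (2 * X z.1 ^ 1) * S z.2 ^ 1)
            ((nuM θ).prod μn) := ((hIX 1).const_mul 2).mul_prod (hIS 1)
        have i3 : Integrable (fun z : (ℝ × ℝ) × (Fin n → ℝ × ℝ) => X z.1 ^ 0 * S z.2 ^ 2)
            ((nuM θ).prod μn) := (hIX 0).mul_prod (hIS 2)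
        have i23 : Integrable (fun z : (ℝ × ℝ) × (Fin n → ℝ × ℝ) =>
            (2 * X z.1 ^ 1) * S z.2 ^ 1 + X z.1 ^ 0 * S z.2 ^ 2) ((nuM θ).prod μn) := i2.add i3
        rw [hexp, integral_add i1 i23, integral_add i2 i3,
          integral_prod_mul (fun q => X q ^ 2) (fun p => S p ^ 0),
          integral_prod_mul (fun q => 2 * X q ^ 1) (fun p => S p ^ 1),
          integral_prod_mul (fun q => X q ^ 0) (fun p => S p ^ 2),
          integral_const_mul 2]
        rw [hX]
        rw [coord_m2 h0 h1 (ζ 0), coord_m1 h0 h1 (ζ 0), coord_m0 h0 h1 (ζ 0)]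
        have eS0 : ∫ p, S p ^ 0 ∂μn = 1 := pi_m0 h0 h1 n (fun i => ζ i.succ)
        have eS2 : ∫ p, S p ^ 2 ∂μn = θ * ∑ i : Fin n, ζ i.succ ^ 2 := ih2
        rw [eS0, eS2, Fin.sum_univ_succ (f := fun i => ζ i ^ 2)]
        ring
      · -- fourth moment
        rw [key 4]
        have hexp : (fun z : (ℝ × ℝ) × (Fin n → ℝ × ℝ) => (X z.1 + S z.2) ^ 4)
            = fun z => X z.1 ^ 4 * S z.2 ^ 0
                + ((4 * X z.1 ^ 3) * S z.2 ^ 1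
                + ((6 * X z.1 ^ 2) * S z.2 ^ 2
                + ((4 * X z.1 ^ 1) * S z.2 ^ 3 + X z.1 ^ 0 * S z.2 ^ 4))) := by
          funext z; ring
        have i1 : Integrable (fun z : (ℝ × ℝ) × (Fin n → ℝ × ℝ) => X z.1 ^ 4 * S z.2 ^ 0)
            ((nuM θ).prod μn) := (hIX 4).mul_prod (hIS 0)
        have i2 : Integrable (fun z : (ℝ × ℝ) × (Fin n → ℝ × ℝ) => (4 * X z.1 ^ 3) * S z.2 ^ 1)
            ((nuM θ).prod μn) := ((hIX 3).const_mul 4).mul_prod (hIS 1)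
        have i3 : Integrable (fun z : (ℝ × ℝ) × (Fin n → ℝ × ℝ) => (6 * X z.1 ^ 2) * S z.2 ^ 2)
            ((nuM θ).prod μn) := ((hIX 2).const_mul 6).mul_prod (hIS 2)
        have i4 : Integrable (fun z : (ℝ × ℝ) × (Fin n → ℝ × ℝ) => (4 * X z.1 ^ 1) * S z.2 ^ 3)
            ((nuM θ).prod μn) := ((hIX 1).const_mul 4).mul_prod (hIS 3)
        have i5 : Integrable (fun z : (ℝ × ℝ) × (Fin n → ℝ × ℝ) => X z.1 ^ 0 * S z.2 ^ 4)
            ((nuM θ).prod μn) := (hIX 0).mul_prod (hIS 4)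
        have i45 : Integrable (fun z : (ℝ × ℝ) × (Fin n → ℝ × ℝ) =>
            (4 * X z.1 ^ 1) * S z.2 ^ 3 + X z.1 ^ 0 * S z.2 ^ 4) ((nuM θ).prod μn) := i4.add i5
        have i345 : Integrable (fun z : (ℝ × ℝ) × (Fin n → ℝ × ℝ) =>
            (6 * X z.1 ^ 2) * S z.2 ^ 2 + ((4 * X z.1 ^ 1) * S z.2 ^ 3 + X z.1 ^ 0 * S z.2 ^ 4))
            ((nuM θ).prod μn) := i3.add i45
        have i2345 : Integrable (fun z : (ℝ × ℝ) × (Fin n → ℝ × ℝ) =>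
            (4 * X z.1 ^ 3) * S z.2 ^ 1 + ((6 * X z.1 ^ 2) * S z.2 ^ 2
              + ((4 * X z.1 ^ 1) * S z.2 ^ 3 + X z.1 ^ 0 * S z.2 ^ 4)))
            ((nuM θ).prod μn) := i2.add i345
        rw [hexp, integral_add i1 i2345, integral_add i2 i345, integral_add i3 i45,
          integral_add i4 i5,
          integral_prod_mul (fun q => X q ^ 4) (fun p => S p ^ 0),
          integral_prod_mul (fun q => 4 * X q ^ 3) (fun p => S p ^ 1),
          integral_prod_mul (fun q => 6 * X q ^ 2) (fun p => S p ^ 2),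
          integral_prod_mul (fun q => 4 * X q ^ 1) (fun p => S p ^ 3),
          integral_prod_mul (fun q => X q ^ 0) (fun p => S p ^ 4),
          integral_const_mul 4, integral_const_mul 6, integral_const_mul 4]
        rw [hX]
        rw [coord_m4 h0 h1 (ζ 0), coord_m3 h0 h1 (ζ 0), coord_m2 h0 h1 (ζ 0),
          coord_m1 h0 h1 (ζ 0), coord_m0 h0 h1 (ζ 0)]
        have eS0 : ∫ p, S p ^ 0 ∂μn = 1 := pi_m0 h0 h1 n (fun i => ζ i.succ)
        have eS2 : ∫ p, S p ^ 2 ∂μn = θ * ∑ i : Fin n, ζ i.succ ^ 2 := ih2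
        have eS4 : ∫ p, S p ^ 4 ∂μn
            = 3 * θ * (1 - θ) * ∑ i : Fin n, ζ i.succ ^ 4 + 3 * θ ^ 2 * (∑ i : Fin n, ζ i.succ ^ 2) ^ 2 := ih4
        rw [eS0, eS2, eS4, Fin.sum_univ_succ (f := fun i => ζ i ^ 2),
          Fin.sum_univ_succ (f := fun i => ζ i ^ 4)]
        ring

end Stmt11Aux

/-- For `x = b ⊙ g` with i.i.d. Bernoulli(θ) entries `b`, independent standard Gaussian `g`,
and a fixed vector `ζ ∈ ℝ^m`: `E[(ζᵀx)⁴] = 3θ(1-θ)‖ζ‖₄⁴ + 3θ²‖ζ‖₂⁴`. -/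
theorem stmt_11 {m : ℕ} (θ : ℝ) (hθ0 : 0 < θ) (hθ1 : θ < 1) (ζ : Fin m → ℝ)
    {Ω : Type*} [MeasureSpace Ω] [IsProbabilityMeasure (ℙ : Measure Ω)]
    (b g : Ω → Fin m → ℝ)
    (hlaw : Measure.map (fun ω => fun i => (b ω i, g ω i)) ℙ =
      Measure.pi (fun _ : Fin m =>
        (θ.toNNReal • Measure.dirac (1 : ℝ) +
            (1 - θ).toNNReal • Measure.dirac (0 : ℝ)).prod (gaussianReal 0 1))) :
    ∫ ω, (∑ i, ζ i * (b ω i * g ω i)) ^ 4 =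
      3 * θ * (1 - θ) * ∑ i, ζ i ^ 4 + 3 * θ ^ 2 * (∑ i, ζ i ^ 2) ^ 2 := by
  have h0 : (0:ℝ) ≤ θ := le_of_lt hθ0
  have h1 : θ ≤ 1 := le_of_lt hθ1
  haveI := Stmt11Aux.nu_prob h0 h1
  have hlaw' : Measure.map (fun ω => fun i => (b ω i, g ω i)) ℙ
      = Measure.pi (fun _ : Fin m => Stmt11Aux.nuM θ) := hlaw
  have hae : AEMeasurable (fun ω => fun i => (b ω i, g ω i)) ℙ := by
    by_contra h
    rw [Measure.map_of_not_aemeasurable h] at hlaw'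
    have h2 := congrArg (fun μ : Measure (Fin m → ℝ × ℝ) => μ Set.univ) hlaw'
    simp only [Measure.coe_zero, Pi.zero_apply, measure_univ] at h2
    exact zero_ne_one h2
  have hF : Measurable (fun p : Fin m → ℝ × ℝ => (∑ i, ζ i * (p i).1 * (p i).2) ^ 4) := by
    fun_prop
  have hmap : ∫ p : Fin m → ℝ × ℝ, (∑ i, ζ i * (p i).1 * (p i).2) ^ 4
        ∂(Measure.map (fun ω => fun i => (b ω i, g ω i)) ℙ)
      = ∫ ω, (∑ i, ζ i * (b ω i * g ω i)) ^ 4 := by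
    rw [integral_map hae hF.aestronglyMeasurable]
    congr 1
    funext ω
    simp [mul_assoc]
  rw [← hmap, hlaw']
  exact (Stmt11Aux.pi_moment h0 h1 m ζ).2
end

section
/- Let A = [a₁, …, a_m] ∈ ℝ^{n×m} be a tight frame satisfying (1/K)AAᵀ = I with K = m/n, columns of unit norm, and mutual coherence max_{i≠j}|⟨a_i,a_j⟩| ≤ μ < 1/20. Suppose ξ > 0 satisfies 1 < 2η·ξ^{3/2} for some constant η < 2^{-6}. Let q ∈ S^{n-1} be a critical point of φ_T(q) = -(1/4)‖Aᵀq‖₄⁴ on the sphere with ζ = Aᵀq satisfying ‖ζ‖₄⁴ ≥ ξ μ^{2/3} ‖ζ‖₃², and suppose at least two coordinates ζ₁, ζ₂ (corresponding to columns a₁, a₂) satisfy |ζ_i| > 2|β_i|/α_i with α_i = ‖ζ‖₄⁴/‖a_i‖², β_i = ∑_{j≠i}⟨a_i,a_j⟩ζ_j³/‖a_i‖². Then there exists a unit vector v ⊥ q with vᵀ Hess φ_T(q) v ≤ -(1/4)‖ζ‖₄⁴, i.e., q is a strict saddle point. -/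
open RealInnerProductSpace

set_option maxHeartbeats 1600000 in
/-- Lemma `app-case-3` of Qu et al.: a critical point of `φ_T` on the sphere lying in the
region `‖ζ‖₄⁴ ≥ ξ μ^{2/3} ‖ζ‖₃²`, having at least two coordinates with `|ζ_i| > 2|β_i|/α_i`,
is a strict saddle point: some unit `v ⊥ q` has `vᵀ Hess φ_T(q) v ≤ -(1/4)‖ζ‖₄⁴`. -/
theorem stmt_19 {n m : ℕ} (a : Fin m → EuclideanSpace ℝ (Fin n))
    (q : EuclideanSpace ℝ (Fin n)) (μ ξ η : ℝ) (i₁ i₂ : Fin m)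
    (hq : ‖q‖ = 1)
    (hcol : ∀ i, ‖a i‖ = 1)
    (htf : ∀ u : EuclideanSpace ℝ (Fin n),
      ∑ i, ⟪a i, u⟫ ^ 2 = ((m : ℝ) / n) * ‖u‖ ^ 2)
    (hμ0 : 0 < μ) (hμ : μ < 1 / 20)
    (hcoh : ∀ i j, i ≠ j → |⟪a i, a j⟫| ≤ μ)
    (hξ0 : 0 < ξ) (hη : η < (2 : ℝ) ^ (-(6 : ℤ)))
    (hξη : 1 < 2 * η * ξ ^ ((3 : ℝ) / 2))
    (hcrit : (∑ i, ⟪a i, q⟫ ^ 3 • a i) - ⟪q, ∑ i, ⟪a i, q⟫ ^ 3 • a i⟫ • q = 0)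
    (hreg : ξ * μ ^ ((2 : ℝ) / 3) * (∑ i, |⟪a i, q⟫| ^ 3) ^ ((2 : ℝ) / 3)
      ≤ ∑ i, ⟪a i, q⟫ ^ 4)
    (hne : i₁ ≠ i₂)
    (hbig₁ : 2 * |(∑ j ∈ Finset.univ.erase i₁, ⟪a i₁, a j⟫ * ⟪a j, q⟫ ^ 3) / ‖a i₁‖ ^ 2| /
        ((∑ k, ⟪a k, q⟫ ^ 4) / ‖a i₁‖ ^ 2) < |⟪a i₁, q⟫|)
    (hbig₂ : 2 * |(∑ j ∈ Finset.univ.erase i₂, ⟪a i₂, a j⟫ * ⟪a j, q⟫ ^ 3) / ‖a i₂‖ ^ 2| /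
        ((∑ k, ⟪a k, q⟫ ^ 4) / ‖a i₂‖ ^ 2) < |⟪a i₂, q⟫|) :
    ∃ v : EuclideanSpace ℝ (Fin n), ‖v‖ = 1 ∧ ⟪v, q⟫ = 0 ∧
      -(3 * ∑ i, ⟪a i, q⟫ ^ 2 * ⟪a i, v - ⟪q, v⟫ • q⟫ ^ 2
          - (∑ i, ⟪a i, q⟫ ^ 4) * ‖v - ⟪q, v⟫ • q‖ ^ 2)
        ≤ -(1 / 4) * ∑ i, ⟪a i, q⟫ ^ 4 := by
  classical
  have hself : ∀ i, ⟪a i, a i⟫ = 1 := fun i => by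
    rw [real_inner_self_eq_norm_sq, hcol, one_pow]
  set lam : ℝ := ∑ i, ⟪a i, q⟫ ^ 4 with hlamdef
  have hlam_nonneg : 0 ≤ lam := Finset.sum_nonneg fun i _ => by positivity
  -- critical point equation
  have hc : ⟪q, ∑ i, ⟪a i, q⟫ ^ 3 • a i⟫ = lam := by
    rw [inner_sum, hlamdef]
    refine Finset.sum_congr rfl fun i _ => ?_
    rw [real_inner_smul_right, real_inner_comm q (a i)]; ring
  have hsum_eq : ∑ i, ⟪a i, q⟫ ^ 3 • a i = lam • q := by
    have h := sub_eq_zero.mp hcrit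
    rw [hc] at h; exact h
  have hAq : ∀ i, ∑ j, ⟪a i, a j⟫ * ⟪a j, q⟫ ^ 3 = lam * ⟪a i, q⟫ := by
    intro i
    have h1 : ⟪a i, ∑ j, ⟪a j, q⟫ ^ 3 • a j⟫ = lam * ⟪a i, q⟫ := by
      rw [hsum_eq, real_inner_smul_right]
    rw [inner_sum] at h1
    rw [← h1]
    refine Finset.sum_congr rfl fun j _ => ?_
    rw [real_inner_smul_right]; ring
  have hbeta : ∀ i, ∑ j ∈ Finset.univ.erase i, ⟪a i, a j⟫ * ⟪a j, q⟫ ^ 3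
      = lam * ⟪a i, q⟫ - ⟪a i, q⟫ ^ 3 := by
    intro i
    have h2 := hAq i
    rw [← Finset.add_sum_erase _ _ (Finset.mem_univ i), hself i, one_mul] at h2
    linarith
  simp only [hcol, one_pow, div_one, hbeta] at hbig₁ hbig₂
  -- lam > 0
  have hlam_pos : 0 < lam := by
    rcases hlam_nonneg.lt_or_eq with h | h
    · exact h
    · exfalso
      have hz : ⟪a i₁, q⟫ = 0 := by
        have h0 := (Finset.sum_eq_zero_iff_of_nonneg
          (fun i _ => by positivity : ∀ i ∈ Finset.univ, (0:ℝ) ≤ ⟪a i, q⟫ ^ 4)).mp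
          (by rw [← hlamdef, ← h]) i₁ (Finset.mem_univ i₁)
        exact pow_eq_zero_iff (by norm_num) |>.mp h0
      rw [hz, ← h] at hbig₁
      norm_num at hbig₁
  -- coordinates are large
  have hhalf : ∀ i : Fin m,
      2 * |lam * ⟪a i, q⟫ - ⟪a i, q⟫ ^ 3| / lam < |⟪a i, q⟫| → lam / 2 < ⟪a i, q⟫ ^ 2 := by
    intro i h
    set z := ⟪a i, q⟫ with hz
    have hz0 : z ≠ 0 := by
      rintro h0
      rw [h0] at h
      norm_num at h
    have h2 : 2 * |lam * z - z ^ 3| < lam * |z| := by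
      rw [div_lt_iff₀ hlam_pos] at h; linarith
    have hfac : |lam * z - z ^ 3| = |z| * |lam - z ^ 2| := by
      rw [← abs_mul]; ring_nf
    rw [hfac] at h2
    have hzpos : 0 < |z| := abs_pos.mpr hz0
    have h3 : 2 * |lam - z ^ 2| < lam :=
      lt_of_mul_lt_mul_right (by nlinarith : 2 * |lam - z ^ 2| * |z| < lam * |z|)
        (abs_nonneg z)
    have h4 := abs_lt.mp (by linarith : |lam - z ^ 2| < lam / 2)
    linarith [h4.1, h4.2]
  have hz1sq : lam / 2 < ⟪a i₁, q⟫ ^ 2 := hhalf i₁ hbig₁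
  have hz2sq : lam / 2 < ⟪a i₂, q⟫ ^ 2 := hhalf i₂ hbig₂
  set z1 := ⟪a i₁, q⟫ with hz1def
  set z2 := ⟪a i₂, q⟫ with hz2def
  set ρ := ⟪a i₁, a i₂⟫ with hρdef
  have hρ : |ρ| ≤ μ := hcoh i₁ i₂ hne
  have hρ' : ⟪a i₂, a i₁⟫ = ρ := by rw [real_inner_comm]
  have hρ'' : ⟪a i₁, a i₂⟫ = ρ := hρdef.symm
  -- the test direction
  set w : EuclideanSpace ℝ (Fin n) := z2 • a i₁ - z1 • a i₂ with hwdef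
  have hwq : ⟪w, q⟫ = 0 := by
    simp only [hwdef, inner_sub_left, real_inner_smul_left, ← hz1def, ← hz2def]
    ring
  have hqw : ⟪q, w⟫ = 0 := by rw [real_inner_comm]; exact hwq
  have hs1 : ⟪a i₁, w⟫ = z2 - z1 * ρ := by
    simp only [hwdef, inner_sub_right, real_inner_smul_right, hself, hρ', hρ'']
    ring
  have hs2 : ⟪a i₂, w⟫ = z2 * ρ - z1 := by
    simp only [hwdef, inner_sub_right, real_inner_smul_right, hself, hρ', hρ'']
    ring
  have hnw : ‖w‖ ^ 2 = z1 ^ 2 + z2 ^ 2 - 2 * ρ * z1 * z2 := by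
    rw [← real_inner_self_eq_norm_sq]
    simp only [hwdef, inner_sub_left, inner_sub_right, real_inner_smul_left,
      real_inner_smul_right, hself, hρ', hρ'']
    ring
  have hprod : 2 * |z1 * z2| ≤ z1 ^ 2 + z2 ^ 2 := by
    nlinarith [sq_nonneg (|z1| - |z2|), abs_mul z1 z2, sq_abs z1, sq_abs z2,
      abs_nonneg z1, abs_nonneg z2]
  have hrz : |2 * ρ * z1 * z2| ≤ |ρ| * (z1 ^ 2 + z2 ^ 2) := by
    have e : 2 * ρ * z1 * z2 = ρ * (2 * (z1 * z2)) := by ring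
    rw [e, abs_mul]
    have e2 : |2 * (z1 * z2)| = 2 * |z1 * z2| := by
      rw [abs_mul]; norm_num
    rw [e2]
    exact mul_le_mul_of_nonneg_left hprod (abs_nonneg ρ)
  have hrz1 := (abs_le.mp hrz).1
  have hrz2 := (abs_le.mp hrz).2
  have hzsum_pos : 0 < z1 ^ 2 + z2 ^ 2 := by nlinarith [sq_nonneg z2]
  have hnw_pos : 0 < ‖w‖ ^ 2 := by
    rw [hnw]
    nlinarith [mul_le_mul_of_nonneg_right hρ hzsum_pos.le]
  have hwpos : 0 < ‖w‖ := by nlinarith [norm_nonneg w]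
  have hwne : ‖w‖ ≠ 0 := ne_of_gt hwpos
  refine ⟨‖w‖⁻¹ • w, ?_, ?_, ?_⟩
  · rw [norm_smul, norm_inv, norm_norm, inv_mul_cancel₀ hwne]
  · rw [real_inner_smul_left, hwq, mul_zero]
  · have hqv : ⟪q, ‖w‖⁻¹ • w⟫ = 0 := by
      rw [real_inner_smul_right, hqw, mul_zero]
    rw [hqv, zero_smul, sub_zero]
    have hvn : ‖(‖w‖⁻¹ • w : EuclideanSpace ℝ (Fin n))‖ = 1 := by
      rw [norm_smul, norm_inv, norm_norm, inv_mul_cancel₀ hwne]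
    rw [hvn, one_pow, mul_one]
    -- main estimate
    have hav : ∀ j : Fin m, ⟪a j, ‖w‖⁻¹ • w⟫ ^ 2 = (‖w‖ ^ 2)⁻¹ * ⟪a j, w⟫ ^ 2 := by
      intro j
      rw [real_inner_smul_right, mul_pow, inv_pow]
    -- lower bound on s₁² + s₂²
    have hss : (1 - μ) * ‖w‖ ^ 2 ≤ ⟪a i₁, w⟫ ^ 2 + ⟪a i₂, w⟫ ^ 2 := by
      rw [hs1, hs2, hnw]
      have hint1 : 0 ≤ (μ - |ρ|) * (1 - |ρ|) * (z1 ^ 2 + z2 ^ 2) :=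
        mul_nonneg (mul_nonneg (by linarith) (by linarith [hρ])) hzsum_pos.le
      have hint2 : 0 ≤ (1 + μ) * (|ρ| * (z1 ^ 2 + z2 ^ 2) - 2 * ρ * z1 * z2) :=
        mul_nonneg (by linarith) (by linarith)
      nlinarith [sq_abs ρ]
    have hT2 : lam / 2 * (⟪a i₁, w⟫ ^ 2 + ⟪a i₂, w⟫ ^ 2)
        ≤ z1 ^ 2 * ⟪a i₁, w⟫ ^ 2 + z2 ^ 2 * ⟪a i₂, w⟫ ^ 2 := by
      nlinarith [sq_nonneg ⟪a i₁, w⟫, sq_nonneg ⟪a i₂, w⟫]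
    have hsub : z1 ^ 2 * ⟪a i₁, ‖w‖⁻¹ • w⟫ ^ 2 + z2 ^ 2 * ⟪a i₂, ‖w‖⁻¹ • w⟫ ^ 2
        ≤ ∑ i, ⟪a i, q⟫ ^ 2 * ⟪a i, ‖w‖⁻¹ • w⟫ ^ 2 := by
      have h := Finset.sum_le_sum_of_subset_of_nonneg
        (Finset.subset_univ ({i₁, i₂} : Finset (Fin m)))
        (fun i _ _ => by positivity :
          ∀ i ∈ Finset.univ, i ∉ ({i₁, i₂} : Finset (Fin m)) →
            (0:ℝ) ≤ ⟪a i, q⟫ ^ 2 * ⟪a i, ‖w‖⁻¹ • w⟫ ^ 2)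
      rwa [Finset.sum_pair hne, ← hz1def, ← hz2def] at h
    have hlow : lam / 2 * (1 - μ)
        ≤ z1 ^ 2 * ⟪a i₁, ‖w‖⁻¹ • w⟫ ^ 2 + z2 ^ 2 * ⟪a i₂, ‖w‖⁻¹ • w⟫ ^ 2 := by
      rw [hav i₁, hav i₂]
      have step1 : lam / 2 * ((1 - μ) * ‖w‖ ^ 2)
          ≤ z1 ^ 2 * ⟪a i₁, w⟫ ^ 2 + z2 ^ 2 * ⟪a i₂, w⟫ ^ 2 := by
        calc lam / 2 * ((1 - μ) * ‖w‖ ^ 2)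
            ≤ lam / 2 * (⟪a i₁, w⟫ ^ 2 + ⟪a i₂, w⟫ ^ 2) :=
              mul_le_mul_of_nonneg_left hss (by linarith)
          _ ≤ _ := hT2
      have e : lam / 2 * (1 - μ)
          = (‖w‖ ^ 2)⁻¹ * (lam / 2 * ((1 - μ) * ‖w‖ ^ 2)) := by
        field_simp
      rw [e]
      calc (‖w‖ ^ 2)⁻¹ * (lam / 2 * ((1 - μ) * ‖w‖ ^ 2))
          ≤ (‖w‖ ^ 2)⁻¹ * (z1 ^ 2 * ⟪a i₁, w⟫ ^ 2 + z2 ^ 2 * ⟪a i₂, w⟫ ^ 2) :=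
            mul_le_mul_of_nonneg_left step1 (by positivity)
        _ = _ := by ring
    have hsum_low : lam / 2 * (1 - μ) ≤ ∑ i, ⟪a i, q⟫ ^ 2 * ⟪a i, ‖w‖⁻¹ • w⟫ ^ 2 :=
      le_trans hlow hsub
    have hlm : lam * μ ≤ lam * (1 / 20) := mul_le_mul_of_nonneg_left hμ.le hlam_nonneg
    linarith
end
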